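/- arXiv:2310.14931 — 4 statements merged into one kernel-verified Lean document; each statement's English description precedes it below -/
import Mathlib

section
/- Assume (H0): (i) for all s ∈ [0,τ], x⁰ ∈ X(0), xˢ ∈ X(s) and y ∈ Y, the function θ ↦ L(s, x⁰+θ(xˢ−x⁰), y) is absolutely continuous on [0,1], so that L(s,xˢ,y) = L(s,x⁰,y) + ∫₀¹ d_xL(s, x⁰+θ(xˢ−x⁰), y; xˢ−x⁰) dθ; (ii) for all such s, x⁰, xˢ, y and all φ ∈ X, the directional derivative d_xL(s, x⁰+θ(xˢ−x⁰), y; φ) exists for almost all θ ∈ [0,1] and θ ↦ d_xL(s, x⁰+θ(xˢ−x⁰), y; φ) belongs to L¹(0,1). Assume further (H1): for all s ∈ [0,τ], g(s) is finite, X(s) = {xˢ} is a singleton, and Y(0,x⁰) = {p⁰} is a singleton; (H2): the limit d_sL(0,x⁰,p⁰) = lim_{s→0⁺} (L(s,x⁰,p⁰) − L(0,x⁰,p⁰))/s exists; (H3): the limit R(x⁰,p⁰) = lim_{s→0⁺} ∫₀¹ d_xL(s, x⁰+θ(xˢ−x⁰), p⁰; (xˢ−x⁰)/s) dθ exists. Then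 dg(0) = lim_{s→0⁺} (g(s) − g(0))/s exists and dg(0) = d_sL(0,x⁰,p⁰) + R(x⁰,p⁰). -/
/-!
On `[0, τ]` the Lagrangian `L(s, xˢ, ·)` is affine and bounded above by the finite value `g(s)`,
hence constant, so `g(s) = L(s, xˢ, p⁰)`. Splitting
`g(s) - g(0) = (L(s, xˢ, p⁰) - L(s, x⁰, p⁰)) + (L(s, x⁰, p⁰) - L(0, x⁰, p⁰))`, the second term
gives `d_s L(0, x⁰, p⁰)` and the first is the integral of `d_x L` along the segment `[x⁰, xˢ]`,
which, after dividing by `s` and using positive homogeneity of directional derivatives,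
is the integral whose limit is `R(x⁰, p⁰)`.
-/

open Filter Topology MeasureTheory

noncomputable section

/-- `sup_{y ∈ Y} L(s,x,y)`, valued in `EReal`. -/
def supY {X Y : Type*} (L : ℝ → X → Y → ℝ) (s : ℝ) (x : X) : EReal :=
  ⨆ y : Y, (L s x y : EReal)

/-- The parametrized minimax `g(s) = inf_{x ∈ X} sup_{y ∈ Y} L(s,x,y)`. -/
def gfun {X Y : Type*} (L : ℝ → X → Y → ℝ) (s : ℝ) : EReal :=
  ⨅ x : X, supY L s x

/-- The set `X(s)` of minimizers for the minimax. -/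
def Xset {X Y : Type*} (L : ℝ → X → Y → ℝ) (s : ℝ) : Set X :=
  {x | gfun L s = supY L s x}

/-- The set `Y(s,x)` of adjoint states: solutions `p` of
`d_x L(s,x,p;φ) = 0` for all `φ ∈ X`, where `DL` denotes the directional
derivative `d_x L`. -/
def Yadj {X Y : Type*} (DL : ℝ → X → Y → X → ℝ) (s : ℝ) (x : X) : Set Y :=
  {p | ∀ φ : X, DL s x p φ = 0}

theorem eq_of_affine_of_bddAbove {Y : Type*} [AddCommGroup Y] [Module ℝ Y] {f : Y → ℝ}
    (haff : ∀ (y z : Y) (t : ℝ), f (t • y + (1 - t) • z) = t * f y + (1 - t) * f z)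
    (hbdd : BddAbove (Set.range f)) (y z : Y) : f y = f z := by
  by_contra hne
  obtain ⟨c, hc⟩ := hbdd
  have hyz : f y - f z ≠ 0 := sub_ne_zero.mpr hne
  -- the affine line through `f z` and `f y` reaches the level `c + 1`
  set t := (c - f z + 1) / (f y - f z)
  have ht : t * (f y - f z) = c - f z + 1 := div_mul_cancel₀ _ hyz
  have hle := hc ⟨t • y + (1 - t) • z, rfl⟩
  rw [haff] at hle
  linarith

theorem bddAbove_range_of_iSup_coe_eq {Y : Type*} {f : Y → ℝ} {c : ℝ}
    (h : ⨆ y, (f y : EReal) = c) : BddAbove (Set.range f) :=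
  ⟨c, by
    rintro _ ⟨y, rfl⟩
    exact EReal.coe_le_coe_iff.mp (h ▸ le_iSup (fun y => (f y : EReal)) y)⟩

theorem toReal_gfun_eq_of_mem_Xset {X Y : Type*} [AddCommGroup Y] [Module ℝ Y]
    {L : ℝ → X → Y → ℝ} {s : ℝ} {x : X}
    (haff : ∀ (y z : Y) (t : ℝ), L s x (t • y + (1 - t) • z) = t * L s x y + (1 - t) * L s x z)
    {c : ℝ} (hc : gfun L s = c) (hx : x ∈ Xset L s) (p : Y) :
    (gfun L s).toReal = L s x p := by
  have hsup : supY L s x = c := hx ▸ hc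
  have hconst := eq_of_affine_of_bddAbove haff (bddAbove_range_of_iSup_coe_eq hsup)
  rw [hx, supY, funext fun y => hconst y p, iSup_const, EReal.toReal_coe]

theorem tendsto_const_mul_nhdsGT_zero {c : ℝ} (hc : 0 < c) :
    Tendsto (c * ·) (𝓝[>] (0 : ℝ)) (𝓝[>] 0) :=
  tendsto_iff_comap.mpr (comap_mulLeft_nhdsGT_zero hc).ge

theorem dirDeriv_smul_eq_mul {E : Type*} [AddCommGroup E] [Module ℝ E] {f : E → ℝ}
    {x v : E} {c a b : ℝ} (hc : 0 < c)
    (ha : Tendsto (fun t : ℝ => (f (x + t • v) - f x) / t) (𝓝[>] 0) (𝓝 a))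
    (hb : Tendsto (fun t : ℝ => (f (x + t • c • v) - f x) / t) (𝓝[>] 0) (𝓝 b)) :
    b = c * a := by
  have hca : Tendsto (fun t : ℝ => c * ((f (x + (c * t) • v) - f x) / (c * t)))
      (𝓝[>] 0) (𝓝 (c * a)) :=
    (ha.comp (tendsto_const_mul_nhdsGT_zero hc)).const_mul c
  refine tendsto_nhds_unique hb (hca.congr' ?_)
  filter_upwards [self_mem_nhdsWithin] with t ht
  rw [smul_smul, mul_comm t c]
  field_simp [hc.ne', (Set.mem_Ioi.mp ht).ne']

theorem intervalIntegral_dirDeriv_smul {E : Type*} [AddCommGroup E] [Module ℝ E]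
    {f : E → ℝ} {D : E → E → ℝ} {γ : ℝ → E} {w : E} {c : ℝ} (hc : 0 < c)
    (hw : ∀ᵐ θ ∂volume.restrict (Set.Icc (0 : ℝ) 1),
      Tendsto (fun t : ℝ => (f (γ θ + t • w) - f (γ θ)) / t) (𝓝[>] 0) (𝓝 (D (γ θ) w)))
    (hcw : ∀ᵐ θ ∂volume.restrict (Set.Icc (0 : ℝ) 1),
      Tendsto (fun t : ℝ => (f (γ θ + t • c • w) - f (γ θ)) / t) (𝓝[>] 0)
        (𝓝 (D (γ θ) (c • w)))) :
    ∫ θ in (0 : ℝ)..1, D (γ θ) (c • w) = c * ∫ θ in (0 : ℝ)..1, D (γ θ) w := by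
  have hIcc : ∀ᵐ θ ∂volume.restrict (Set.Icc (0 : ℝ) 1), D (γ θ) (c • w) = c * D (γ θ) w := by
    filter_upwards [hw, hcw] with θ hθ hcθ
    exact dirDeriv_smul_eq_mul hc hθ hcθ
  have hΙ : Set.uIoc (0 : ℝ) 1 ⊆ Set.Icc 0 1 :=
    (Set.uIoc_of_le zero_le_one).trans_subset Set.Ioc_subset_Icc_self
  rw [intervalIntegral.integral_congr_ae_restrict (ae_restrict_of_ae_restrict_of_subset hΙ hIcc),
    intervalIntegral.integral_const_mul]

theorem stmt_3_general {X Y : Type*} [AddCommGroup X] [Module ℝ X] [AddCommGroup Y] [Module ℝ Y]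
    (τ : ℝ) (hτ : 0 < τ)
    (L : ℝ → X → Y → ℝ)
    (haff : ∀ (s : ℝ) (x : X) (y z : Y) (t : ℝ),
      L s x (t • y + (1 - t) • z) = t * L s x y + (1 - t) * L s x z)
    (DL : ℝ → X → Y → X → ℝ)
    -- (H0)(ii): the directional derivative `d_x L` exists for a.e. `θ ∈ [0,1]`
    -- along the segment `[x⁰, xˢ]`, and is integrable in `θ`
    (hDL : ∀ s ∈ Set.Icc (0:ℝ) τ, ∀ x0 ∈ Xset L 0, ∀ xs ∈ Xset L s, ∀ (y : Y) (φ : X),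
      (∀ᵐ θ ∂(volume.restrict (Set.Icc (0:ℝ) 1)),
        Tendsto (fun t : ℝ =>
            (L s (x0 + θ • (xs - x0) + t • φ) y - L s (x0 + θ • (xs - x0)) y) / t)
          (𝓝[>] 0) (𝓝 (DL s (x0 + θ • (xs - x0)) y φ)))
      ∧ IntervalIntegrable (fun θ : ℝ => DL s (x0 + θ • (xs - x0)) y φ) volume 0 1)
    -- (H0)(i): absolute continuity of `θ ↦ L(s, x⁰+θ(xˢ-x⁰), y)`, expressed through
    -- the fundamental-theorem-of-calculus identity it implies
    (hAC : ∀ s ∈ Set.Icc (0:ℝ) τ, ∀ x0 ∈ Xset L 0, ∀ xs ∈ Xset L s, ∀ y : Y,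
      L s xs y = L s x0 y + ∫ θ in (0:ℝ)..1, DL s (x0 + θ • (xs - x0)) y (xs - x0))
    -- (H1)
    (xsel : ℝ → X) (p0 : Y)
    (hfin : ∀ s ∈ Set.Icc (0:ℝ) τ, ∃ c : ℝ, gfun L s = (c : EReal))
    (hXs : ∀ s ∈ Set.Icc (0:ℝ) τ, Xset L s = {xsel s})
    -- (H2)
    (dsL : ℝ)
    (hH2 : Tendsto (fun s : ℝ => (L s (xsel 0) p0 - L 0 (xsel 0) p0) / s)
      (𝓝[>] 0) (𝓝 dsL))
    -- (H3)
    (R : ℝ)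
    (hH3 : Tendsto (fun s : ℝ =>
        ∫ θ in (0:ℝ)..1,
          DL s (xsel 0 + θ • (xsel s - xsel 0)) p0 ((1 / s) • (xsel s - xsel 0)))
      (𝓝[>] 0) (𝓝 R)) :
    Tendsto (fun s : ℝ => ((gfun L s).toReal - (gfun L 0).toReal) / s)
      (𝓝[>] 0) (𝓝 (dsL + R)) := by
  have hxsel : ∀ s ∈ Set.Icc (0 : ℝ) τ, xsel s ∈ Xset L s := fun s hs => by
    rw [hXs s hs]; rfl
  have hg : ∀ s ∈ Set.Icc (0 : ℝ) τ, (gfun L s).toReal = L s (xsel s) p0 := fun s hs => by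
    obtain ⟨c, hc⟩ := hfin s hs
    exact toReal_gfun_eq_of_mem_Xset (haff s (xsel s)) hc (hxsel s hs) p0
  have h0 : (0 : ℝ) ∈ Set.Icc 0 τ := ⟨le_rfl, hτ.le⟩
  refine (hH2.add hH3).congr' ?_
  filter_upwards [Ioo_mem_nhdsGT hτ] with s hs
  have hsτ : s ∈ Set.Icc 0 τ := Set.Ioo_subset_Icc_self hs
  have hDLs := hDL s hsτ (xsel 0) (hxsel 0 h0) (xsel s) (hxsel s hsτ) p0
  have hhom := intervalIntegral_dirDeriv_smul (γ := fun θ => xsel 0 + θ • (xsel s - xsel 0))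
    (f := fun x => L s x p0) (D := fun x => DL s x p0) (one_div_pos.mpr hs.1)
    (hDLs (xsel s - xsel 0)).1 (hDLs ((1 / s) • (xsel s - xsel 0))).1
  rw [hg s hsτ, hg 0 h0, hAC s hsτ (xsel 0) (hxsel 0 h0) (xsel s) (hxsel s hsτ) p0, hhom]
  field_simp [hs.1.ne']
  ring

/-- **Delfour–Sturm theorem on the one-sided derivative of a parametrized minimax.**
Under (H0) (absolute continuity along segments, encoded through the resulting
integral identity, together with a.e. existence and integrability of the
directional derivatives `d_x L`), (H1) (finiteness of `g(s)` and singleton sets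
`X(s) = {xˢ}`, `Y(0,x⁰) = {p⁰}`), (H2) (existence of `d_s L(0,x⁰,p⁰)`) and (H3)
(existence of the limit `R(x⁰,p⁰)` of the averaged-adjoint remainder), the
one-sided derivative `dg(0) = lim_{s→0⁺} (g(s)-g(0))/s` exists and
`dg(0) = d_s L(0,x⁰,p⁰) + R(x⁰,p⁰)`. -/
theorem stmt_3 {X Y : Type*} [AddCommGroup X] [Module ℝ X] [AddCommGroup Y] [Module ℝ Y]
    (τ : ℝ) (hτ : 0 < τ)
    (L : ℝ → X → Y → ℝ)
    (haff : ∀ (s : ℝ) (x : X) (y z : Y) (t : ℝ),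
      L s x (t • y + (1 - t) • z) = t * L s x y + (1 - t) * L s x z)
    (DL : ℝ → X → Y → X → ℝ)
    -- (H0)(ii): the directional derivative `d_x L` exists for a.e. `θ ∈ [0,1]`
    -- along the segment `[x⁰, xˢ]`, and is integrable in `θ`
    (hDL : ∀ s ∈ Set.Icc (0:ℝ) τ, ∀ x0 ∈ Xset L 0, ∀ xs ∈ Xset L s, ∀ (y : Y) (φ : X),
      (∀ᵐ θ ∂(volume.restrict (Set.Icc (0:ℝ) 1)),
        Tendsto (fun t : ℝ =>
            (L s (x0 + θ • (xs - x0) + t • φ) y - L s (x0 + θ • (xs - x0)) y) / t)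
          (𝓝[>] 0) (𝓝 (DL s (x0 + θ • (xs - x0)) y φ)))
      ∧ IntervalIntegrable (fun θ : ℝ => DL s (x0 + θ • (xs - x0)) y φ) volume 0 1)
    -- (H0)(i): absolute continuity of `θ ↦ L(s, x⁰+θ(xˢ-x⁰), y)`, expressed through
    -- the fundamental-theorem-of-calculus identity it implies
    (hAC : ∀ s ∈ Set.Icc (0:ℝ) τ, ∀ x0 ∈ Xset L 0, ∀ xs ∈ Xset L s, ∀ y : Y,
      L s xs y = L s x0 y + ∫ θ in (0:ℝ)..1, DL s (x0 + θ • (xs - x0)) y (xs - x0))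
    -- (H1)
    (xsel : ℝ → X) (p0 : Y)
    (hfin : ∀ s ∈ Set.Icc (0:ℝ) τ, ∃ c : ℝ, gfun L s = (c : EReal))
    (hXs : ∀ s ∈ Set.Icc (0:ℝ) τ, Xset L s = {xsel s})
    (hY0 : Yadj DL 0 (xsel 0) = {p0})
    -- (H2)
    (dsL : ℝ)
    (hH2 : Tendsto (fun s : ℝ => (L s (xsel 0) p0 - L 0 (xsel 0) p0) / s)
      (𝓝[>] 0) (𝓝 dsL))
    -- (H3)
    (R : ℝ)
    (hH3 : Tendsto (fun s : ℝ =>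
        ∫ θ in (0:ℝ)..1,
          DL s (xsel 0 + θ • (xsel s - xsel 0)) p0 ((1 / s) • (xsel s - xsel 0)))
      (𝓝[>] 0) (𝓝 R)) :
    Tendsto (fun s : ℝ => ((gfun L s).toReal - (gfun L 0).toReal) / s)
      (𝓝[>] 0) (𝓝 (dsL + R)) :=
  stmt_3_general τ hτ L haff DL hDL hAC xsel p0 hfin hXs dsL hH2 R hH3
end
end

section
/- Assume (H0): (i) for all s ∈ [0,τ], x⁰ ∈ X(0), xˢ ∈ X(s) and y ∈ Y, the function θ ↦ L(s, x⁰+θ(xˢ−x⁰), y) is absolutely continuous on [0,1], so that L(s,xˢ,y) = L(s,x⁰,y) + ∫₀¹ d_xL(s, x⁰+θ(xˢ−x⁰), y; xˢ−x⁰) dθ; (ii) for all such s, x⁰, xˢ, y and all φ ∈ X, the directional derivative d_xL(s, x⁰+θ(xˢ−x⁰), y; φ) exists for almost all θ ∈ [0,1] and θ ↦ d_xL(s, x⁰+θ(xˢ−x⁰), y; φ) belongs to L¹(0,1). Assume further (H1a): for all s ∈ [0,τ], X(s) ≠ ∅, g(s) is finite, and for each x ∈ X(0), Y(0,x) ≠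 ∅; (H2a): for all x ∈ X(0) and p ∈ Y(0,x), the limit d_sL(0,x,p) = lim_{s→0⁺} (L(s,x,p) − L(0,x,p))/s exists; (H3a): there exist x⁰ ∈ X(0), p⁰ ∈ Y(0,x⁰) and a choice xˢ ∈ X(s) for each s ∈ (0,τ] such that the limit R(x⁰,p⁰) = lim_{s→0⁺} ∫₀¹ d_xL(s, x⁰+θ(xˢ−x⁰), p⁰; (xˢ−x⁰)/s) dθ exists. Then dg(0) = lim_{s→0⁺} (g(s) − g(0))/s exists, and there exist x⁰ ∈ X(0) and p⁰ ∈ Y(0,x⁰) such that dg(0) = d_sL(0,x⁰,p⁰) + R(x⁰,p⁰). -/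
open Filter Topology MeasureTheory

noncomputable section

/-- An affine real function on a real vector space whose `EReal`-valued supremum
is finite is constant, and equal to that supremum. -/
lemma affine_sup_const {Y : Type*} [AddCommGroup Y] [Module ℝ Y]
    (f : Y → ℝ)
    (haff : ∀ (y z : Y) (t : ℝ), f (t • y + (1 - t) • z) = t * f y + (1 - t) * f z)
    (c : ℝ) (hsup : (⨆ y : Y, (f y : EReal)) = (c : EReal)) (y : Y) : f y = c := by
  have hle : ∀ z : Y, f z ≤ c := by
    intro z
    have : (f z : EReal) ≤ (c : EReal) := hsup ▸ le_iSup (fun w : Y => (f w : EReal)) z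
    exact_mod_cast this
  have hconst : ∀ y z : Y, f y ≤ f z := by
    intro y z
    by_contra h
    push_neg at h
    set t : ℝ := (c + 1 - f z) / (f y - f z) with ht
    have hne : f y - f z ≠ 0 := by intro h0; nlinarith
    have h1 : f (t • y + (1 - t) • z) = t * f y + (1 - t) * f z := haff y z t
    have h2 : t * f y + (1 - t) * f z = t * (f y - f z) + f z := by ring
    have h3 : t * (f y - f z) = c + 1 - f z := by
      rw [ht]; field_simp
    have := hle (t • y + (1 - t) • z)
    rw [h1, h2, h3] at this
    linarith
  have hfz : ∀ z : Y, f z = f y := fun z => le_antisymm (hconst z y) (hconst y z)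
  -- sup ≤ f y, so c ≤ f y
  have hge : (c : EReal) ≤ (f y : EReal) := by
    rw [← hsup]
    exact iSup_le fun z => by rw [hfz z]
  have : c ≤ f y := by exact_mod_cast hge
  linarith [hle y]

/-- **Corollary (existence version) of the Delfour–Sturm minimax derivative theorem.**
Under (H0) (absolute continuity along segments together with a.e. existence and
integrability of the directional derivatives `d_x L`), (H1a) (`X(s) ≠ ∅`, `g(s)`
finite, and `Y(0,x) ≠ ∅` for every `x ∈ X(0)`), (H2a) (existence of
`d_s L(0,x,p)` for all `x ∈ X(0)`, `p ∈ Y(0,x)`) and (H3a) (existence of the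
remainder limit `R(x⁰,p⁰)` for some `x⁰ ∈ X(0)`, `p⁰ ∈ Y(0,x⁰)` and some choice
`s ↦ xˢ ∈ X(s)`), the one-sided derivative `dg(0)` exists and there are
`x⁰ ∈ X(0)` and `p⁰ ∈ Y(0,x⁰)` with `dg(0) = d_s L(0,x⁰,p⁰) + R(x⁰,p⁰)`. -/
theorem stmt_4 {X Y : Type*} [AddCommGroup X] [Module ℝ X] [AddCommGroup Y] [Module ℝ Y]
    (τ : ℝ) (hτ : 0 < τ)
    (L : ℝ → X → Y → ℝ)
    (haff : ∀ (s : ℝ) (x : X) (y z : Y) (t : ℝ),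
      L s x (t • y + (1 - t) • z) = t * L s x y + (1 - t) * L s x z)
    (DL : ℝ → X → Y → X → ℝ)
    -- (H0)(ii)
    (hDL : ∀ s ∈ Set.Icc (0:ℝ) τ, ∀ x0 ∈ Xset L 0, ∀ xs ∈ Xset L s, ∀ (y : Y) (φ : X),
      (∀ᵐ θ ∂(volume.restrict (Set.Icc (0:ℝ) 1)),
        Tendsto (fun t : ℝ =>
            (L s (x0 + θ • (xs - x0) + t • φ) y - L s (x0 + θ • (xs - x0)) y) / t)
          (𝓝[>] 0) (𝓝 (DL s (x0 + θ • (xs - x0)) y φ)))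
      ∧ IntervalIntegrable (fun θ : ℝ => DL s (x0 + θ • (xs - x0)) y φ) volume 0 1)
    -- (H0)(i)
    (hAC : ∀ s ∈ Set.Icc (0:ℝ) τ, ∀ x0 ∈ Xset L 0, ∀ xs ∈ Xset L s, ∀ y : Y,
      L s xs y = L s x0 y + ∫ θ in (0:ℝ)..1, DL s (x0 + θ • (xs - x0)) y (xs - x0))
    -- (H1a)
    (hXne : ∀ s ∈ Set.Icc (0:ℝ) τ, (Xset L s).Nonempty)
    (hfin : ∀ s ∈ Set.Icc (0:ℝ) τ, ∃ c : ℝ, gfun L s = (c : EReal))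
    (hYne : ∀ x ∈ Xset L 0, (Yadj DL 0 x).Nonempty)
    -- (H2a)
    (hH2a : ∀ x ∈ Xset L 0, ∀ p ∈ Yadj DL 0 x,
      ∃ c : ℝ, Tendsto (fun s : ℝ => (L s x p - L 0 x p) / s) (𝓝[>] 0) (𝓝 c))
    -- (H3a)
    (hH3a : ∃ x0 ∈ Xset L 0, ∃ p0 ∈ Yadj DL 0 x0, ∃ xsel : ℝ → X,
      (∀ s ∈ Set.Ioc (0:ℝ) τ, xsel s ∈ Xset L s) ∧
      ∃ R : ℝ, Tendsto (fun s : ℝ =>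
          ∫ θ in (0:ℝ)..1, DL s (x0 + θ • (xsel s - x0)) p0 ((1 / s) • (xsel s - x0)))
        (𝓝[>] 0) (𝓝 R)) :
    ∃ dg : ℝ,
      Tendsto (fun s : ℝ => ((gfun L s).toReal - (gfun L 0).toReal) / s)
        (𝓝[>] 0) (𝓝 dg)
      ∧ ∃ x0 ∈ Xset L 0, ∃ p0 ∈ Yadj DL 0 x0, ∃ dsL R : ℝ,
          Tendsto (fun s : ℝ => (L s x0 p0 - L 0 x0 p0) / s) (𝓝[>] 0) (𝓝 dsL)
          ∧ (∃ xsel : ℝ → X, (∀ s ∈ Set.Ioc (0:ℝ) τ, xsel s ∈ Xset L s) ∧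
              Tendsto (fun s : ℝ =>
                  ∫ θ in (0:ℝ)..1,
                    DL s (x0 + θ • (xsel s - x0)) p0 ((1 / s) • (xsel s - x0)))
                (𝓝[>] 0) (𝓝 R))
          ∧ dg = dsL + R := by
  obtain ⟨x0, hx0, p0, hp0, xsel, hxsel, R, hR⟩ := hH3a
  obtain ⟨dsL, hdsL⟩ := hH2a x0 hx0 p0 hp0
  have h0mem : (0:ℝ) ∈ Set.Icc (0:ℝ) τ := ⟨le_refl 0, hτ.le⟩
  obtain ⟨c0, hc0⟩ := hfin 0 h0mem
  -- g(0).toReal = L 0 x0 p0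
  have hg0 : (gfun L 0).toReal = L 0 x0 p0 := by
    have hx0' : gfun L 0 = supY L 0 x0 := hx0
    have hsc : (⨆ y : Y, (L 0 x0 y : EReal)) = (c0 : EReal) := by
      show supY L 0 x0 = (c0 : EReal)
      rw [← hx0']; exact hc0
    have := affine_sup_const (L 0 x0) (fun y z t => haff 0 x0 y z t) c0 hsc p0
    rw [hc0, EReal.toReal_coe, this]
  -- for s in Ioc 0 τ : exact identity for the difference quotient
  have hev : ∀ s ∈ Set.Ioc (0:ℝ) τ,
      ((gfun L s).toReal - (gfun L 0).toReal) / s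
        = (L s x0 p0 - L 0 x0 p0) / s
          + ∫ θ in (0:ℝ)..1, DL s (x0 + θ • (xsel s - x0)) p0 ((1 / s) • (xsel s - x0)) := by
    intro s hs
    have hs0 : 0 < s := hs.1
    have hs' : s ∈ Set.Icc (0:ℝ) τ := ⟨hs0.le, hs.2⟩
    have hxs : xsel s ∈ Xset L s := hxsel s hs
    obtain ⟨cs, hcs⟩ := hfin s hs'
    -- g(s).toReal = L s (xsel s) p0
    have hgs : (gfun L s).toReal = L s (xsel s) p0 := by
      have hxs' : gfun L s = supY L s (xsel s) := hxs
      have hsc : (⨆ y : Y, (L s (xsel s) y : EReal)) = (cs : EReal) := by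
        show supY L s (xsel s) = (cs : EReal)
        rw [← hxs']; exact hcs
      have := affine_sup_const (L s (xsel s)) (fun y z t => haff s (xsel s) y z t) cs hsc p0
      rw [hcs, EReal.toReal_coe, this]
    set φ : X := xsel s - x0 with hφ
    -- a.e. homogeneity of DL in the direction
    have h1 := (hDL s hs' x0 hx0 (xsel s) hxs p0 φ).1
    have h2 := (hDL s hs' x0 hx0 (xsel s) hxs p0 ((1 / s) • φ)).1
    have hae : ∀ᵐ θ ∂(volume.restrict (Set.Icc (0:ℝ) 1)),
        DL s (x0 + θ • φ) p0 ((1 / s) • φ) = (1 / s) * DL s (x0 + θ • φ) p0 φ := by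
      filter_upwards [h1, h2] with θ ht1 ht2
      set x := x0 + θ • φ with hx
      -- tendsto of scaled quotient
      have hts : Tendsto (fun t : ℝ => t / s) (𝓝[>] (0:ℝ)) (𝓝[>] (0:ℝ)) := by
        apply tendsto_nhdsWithin_of_tendsto_nhds_of_eventually_within
        · have : Tendsto (fun t : ℝ => t / s) (𝓝 (0:ℝ)) (𝓝 (0 / s)) :=
            (tendsto_id.div_const s)
          simpa using this.mono_left nhdsWithin_le_nhds
        · filter_upwards [self_mem_nhdsWithin] with t ht
          exact div_pos ht hs0
      have hcomp : Tendsto (fun t : ℝ =>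
          (1 / s) * ((L s (x + (t / s) • φ) p0 - L s x p0) / (t / s)))
          (𝓝[>] (0:ℝ)) (𝓝 ((1 / s) * DL s x p0 φ)) :=
        ((ht1.comp hts).const_mul (1 / s))
      have heq : (fun t : ℝ =>
          (L s (x + t • ((1 / s) • φ)) p0 - L s x p0) / t)
          =ᶠ[𝓝[>] (0:ℝ)] (fun t : ℝ =>
          (1 / s) * ((L s (x + (t / s) • φ) p0 - L s x p0) / (t / s))) := by
        filter_upwards [self_mem_nhdsWithin] with t ht
        have ht0 : (t:ℝ) ≠ 0 := ne_of_gt ht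
        have hsm : t • ((1 / s) • φ) = (t / s) • φ := by
          rw [smul_smul]; congr 1; field_simp
        rw [hsm]
        field_simp
      have := hcomp.congr' heq.symm
      exact tendsto_nhds_unique ht2 this
    -- integral identity
    have hint : (∫ θ in (0:ℝ)..1, DL s (x0 + θ • φ) p0 ((1 / s) • φ))
        = (1 / s) * ∫ θ in (0:ℝ)..1, DL s (x0 + θ • φ) p0 φ := by
      rw [← intervalIntegral.integral_const_mul]
      apply intervalIntegral.integral_congr_ae
      have hsub : Set.uIoc (0:ℝ) 1 ⊆ Set.Icc (0:ℝ) 1 := by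
        rw [Set.uIoc_of_le (by norm_num : (0:ℝ) ≤ 1)]
        exact Set.Ioc_subset_Icc_self
      have := ae_restrict_iff'₀ (measurableSet_Icc.nullMeasurableSet) |>.mp hae
      filter_upwards [this] with θ hθ hθ'
      exact hθ (hsub hθ')
    have hACs := hAC s hs' x0 hx0 (xsel s) hxs p0
    rw [hgs, hg0, hint, ← hφ] at *
    rw [hACs]
    field_simp
    ring
  refine ⟨dsL + R, ?_, x0, hx0, p0, hp0, dsL, R, hdsL,
    ⟨xsel, hxsel, hR⟩, rfl⟩
  have hmem : Set.Ioc (0:ℝ) τ ∈ 𝓝[>] (0:ℝ) :=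
    Ioc_mem_nhdsGT_of_mem ⟨le_refl 0, hτ⟩
  apply (hdsL.add hR).congr'
  filter_upwards [hmem] with s hs
  exact (hev s hs).symm
end
end

section
/- (Maximal Hardy–Littlewood inequality) For every integrable function f ∈ L¹(ℝⁿ) and every real c > 0, λₙ({x ∈ ℝⁿ : Mf(x) ≥ c}) ≤ 3ⁿ ‖f‖₁ / c. -/
/-!
Every point of the superlevel set `{Mf > c'}` is the centre of a ball `B` with
`c' λ(B) ≤ ∫_B |f|`. By the Vitali covering lemma, a disjoint subfamily of these balls, enlarged
by a factor `τ > 3`, covers the superlevel set; enlarging multiplies volumes by `τⁿ`, while the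
disjoint balls together carry at most `‖f‖₁`, so `c' λ({Mf > c'}) ≤ τⁿ ‖f‖₁`. Vitali needs
bounded radii, so the superlevel set is exhausted by the points having such a ball of radius
`≤ N`. Letting `τ → 3` and `c' → c` gives the bound.
-/

open Filter Topology MeasureTheory
open scoped ENNReal NNReal

noncomputable section

/-- The Hardy–Littlewood maximal function
`Mf(x) = sup_{r>0} (1/λₙ(B(x,r))) ∫_{B(x,r)} |f| dλₙ`, valued in `ℝ≥0∞`. -/
def maximalFn {n : ℕ} (f : EuclideanSpace ℝ (Fin n) → ℝ)
    (x : EuclideanSpace ℝ (Fin n)) : ℝ≥0∞ :=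
  ⨆ (r : ℝ) (_ : 0 < r),
    (∫⁻ t in Metric.ball x r, ‖f t‖₊ ∂volume) / volume (Metric.ball x r)

open Metric Module

section VitaliBound

variable {E : Type*} [NormedAddCommGroup E] [NormedSpace ℝ E] [FiniteDimensional ℝ E]
  [MeasurableSpace E] [BorelSpace E] (μ : Measure E) [μ.IsAddHaarMeasure]
  {s : Set E} {g : E → ℝ≥0∞} {c : ℝ≥0∞}

theorem addHaar_ball_mul_radius (x : E) {τ : ℝ} (hτ : 0 < τ) (r : ℝ) :
    μ (ball x (τ * r)) = ENNReal.ofReal τ ^ finrank ℝ E * μ (ball x r) := by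
  rw [Measure.addHaar_ball_mul_of_pos μ x hτ, Measure.addHaar_ball_center μ x,
    ENNReal.ofReal_pow hτ.le]

theorem mul_measure_le_of_forall_exists_ball_le {R τ : ℝ} (hτ : 3 < τ)
    (h : ∀ x ∈ s, ∃ r ∈ Set.Ioc 0 R, c * μ (ball x r) ≤ ∫⁻ y in ball x r, g y ∂μ) :
    c * μ s ≤ ENNReal.ofReal τ ^ finrank ℝ E * ∫⁻ y, g y ∂μ := by
  choose! ρ hρ hρg using h
  obtain ⟨u, hus, hu_disj, hu_cover⟩ :=
    Vitali.exists_disjoint_subfamily_covering_enlargement_ball s id ρ R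
      (fun x hx => (hρ x hx).2) τ hτ
  have hu_count : u.Countable := hu_disj.countable_of_nonempty_interior fun x hx => by
    rw [isOpen_ball.interior_eq]
    exact nonempty_ball.2 (hρ x (hus hx)).1
  have hs_cover : s ⊆ ⋃ x ∈ u, ball x (τ * ρ x) := fun x hx => by
    obtain ⟨b, hb, hsub⟩ := hu_cover x hx
    exact Set.mem_biUnion hb (hsub (mem_ball_self (hρ x hx).1))
  calc c * μ s ≤ c * ∑' x : u, μ (ball x (τ * ρ x)) := by
        gcongr
        exact (measure_mono hs_cover).trans (measure_biUnion_le μ hu_count _)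
    _ = ∑' x : u, ENNReal.ofReal τ ^ finrank ℝ E * (c * μ (ball x (ρ x))) := by
        rw [← ENNReal.tsum_mul_left]
        congr 1 with x
        rw [addHaar_ball_mul_radius μ _ (by linarith), mul_left_comm]
    _ ≤ ∑' x : u, ENNReal.ofReal τ ^ finrank ℝ E * ∫⁻ y in ball x (ρ x), g y ∂μ := by
        gcongr with x
        exact hρg x (hus x.2)
    _ = ENNReal.ofReal τ ^ finrank ℝ E * ∫⁻ y in ⋃ x ∈ u, ball x (ρ x), g y ∂μ := by
        rw [lintegral_biUnion (s := fun x => ball x (ρ x)) hu_count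
          (fun _ _ => measurableSet_ball) hu_disj, ENNReal.tsum_mul_left]
    _ ≤ ENNReal.ofReal τ ^ finrank ℝ E * ∫⁻ y, g y ∂μ := by
        gcongr
        exact Measure.restrict_le_self

theorem mul_measure_le_of_forall_exists_ball_of_three_lt {τ : ℝ} (hτ : 3 < τ)
    (h : ∀ x ∈ s, ∃ r > 0, c * μ (ball x r) ≤ ∫⁻ y in ball x r, g y ∂μ) :
    c * μ s ≤ ENNReal.ofReal τ ^ finrank ℝ E * ∫⁻ y, g y ∂μ := by
  let S : ℕ → Set E := fun N =>
    {x | ∃ r ∈ Set.Ioc 0 (N : ℝ), c * μ (ball x r) ≤ ∫⁻ y in ball x r, g y ∂μ}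
  have hS_mono : Monotone S := fun M N hMN x ⟨r, hr, hrg⟩ =>
    ⟨r, ⟨hr.1, hr.2.trans (Nat.cast_le.2 hMN)⟩, hrg⟩
  have hs_sub : s ⊆ ⋃ N, S N := fun x hx => by
    obtain ⟨r, hr, hrg⟩ := h x hx
    obtain ⟨N, hN⟩ := exists_nat_ge r
    exact Set.mem_iUnion.2 ⟨N, r, ⟨hr, hN⟩, hrg⟩
  calc c * μ s ≤ c * μ (⋃ N, S N) := by gcongr
    _ = ⨆ N, c * μ (S N) := by rw [hS_mono.directed_le.measure_iUnion, ENNReal.mul_iSup]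
    _ ≤ _ := iSup_le fun N => mul_measure_le_of_forall_exists_ball_le μ hτ fun _ hx => hx

theorem mul_measure_le_of_forall_exists_ball
    (h : ∀ x ∈ s, ∃ r > 0, c * μ (ball x r) ≤ ∫⁻ y in ball x r, g y ∂μ) :
    c * μ s ≤ 3 ^ finrank ℝ E * ∫⁻ y, g y ∂μ := by
  have hlim : Tendsto (fun τ : ℝ => ENNReal.ofReal τ ^ finrank ℝ E * ∫⁻ y, g y ∂μ) (𝓝[>] 3)
      (𝓝 (3 ^ finrank ℝ E * ∫⁻ y, g y ∂μ)) := by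
    have hpow : Tendsto (fun τ : ℝ => ENNReal.ofReal τ ^ finrank ℝ E) (𝓝[>] 3)
        (𝓝 (ENNReal.ofReal 3 ^ finrank ℝ E)) :=
      ENNReal.Tendsto.pow (ENNReal.tendsto_ofReal (tendsto_nhdsWithin_of_tendsto_nhds tendsto_id))
    rw [ENNReal.ofReal_ofNat] at hpow
    exact ENNReal.Tendsto.mul_const hpow (Or.inl (pow_ne_zero _ three_ne_zero))
  exact ge_of_tendsto hlim (eventually_nhdsWithin_of_forall fun τ hτ =>
    mul_measure_le_of_forall_exists_ball_of_three_lt μ hτ h)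

end VitaliBound

theorem exists_ball_of_lt_maximalFn {n : ℕ} {f : EuclideanSpace ℝ (Fin n) → ℝ}
    {x : EuclideanSpace ℝ (Fin n)} {c : ℝ≥0∞} (hc : c < maximalFn f x) :
    ∃ r > 0, c * volume (ball x r) ≤ ∫⁻ t in ball x r, ‖f t‖₊ ∂volume := by
  simp only [maximalFn, lt_iSup_iff] at hc
  obtain ⟨r, hr, hlt⟩ := hc
  exact ⟨r, hr, ((ENNReal.lt_div_iff_mul_lt (Or.inl (measure_ball_pos _ x hr).ne')
    (Or.inl measure_ball_lt_top.ne)).1 hlt).le⟩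

theorem stmt_6_general (n : ℕ) (f : EuclideanSpace ℝ (Fin n) → ℝ)
    (c : ℝ) (hc : 0 < c) :
    volume {x : EuclideanSpace ℝ (Fin n) | ENNReal.ofReal c ≤ maximalFn f x}
      ≤ (3 : ℝ≥0∞) ^ n * (∫⁻ x, ‖f x‖₊ ∂volume) / ENNReal.ofReal c := by
  rw [ENNReal.le_div_iff_mul_le (Or.inl (ENNReal.ofReal_pos.2 hc).ne')
    (Or.inl ENNReal.ofReal_ne_top), mul_comm]
  refine ENNReal.mul_le_of_forall_lt fun c' hc' V hV => ?_
  calc c' * V ≤ c' * volume {x | c' < maximalFn f x} := by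
        gcongr
        exact hV.le.trans (measure_mono fun x hx => hc'.trans_le hx)
    _ ≤ 3 ^ finrank ℝ (EuclideanSpace ℝ (Fin n)) * ∫⁻ x, ‖f x‖₊ ∂volume :=
        mul_measure_le_of_forall_exists_ball volume fun _ hx => exists_ball_of_lt_maximalFn hx
    _ = 3 ^ n * ∫⁻ x, ‖f x‖₊ ∂volume := by rw [finrank_euclideanSpace_fin]

/-- **Maximal Hardy–Littlewood inequality.**
For every integrable `f ∈ L¹(ℝⁿ)` and every real `c > 0`,
`λₙ({x : Mf(x) ≥ c}) ≤ 3ⁿ ‖f‖₁ / c`. -/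
theorem stmt_6 (n : ℕ) (f : EuclideanSpace ℝ (Fin n) → ℝ)
    (hf : Integrable f (volume : Measure (EuclideanSpace ℝ (Fin n))))
    (c : ℝ) (hc : 0 < c) :
    volume {x : EuclideanSpace ℝ (Fin n) | ENNReal.ofReal c ≤ maximalFn f x}
      ≤ (3 : ℝ≥0∞) ^ n * (∫⁻ x, ‖f x‖₊ ∂volume) / ENNReal.ofReal c :=
  stmt_6_general n f c hc
end
end

section
/- Let L : [0,τ]×X×Y → ℝ be a differentiable parametrized Lagrangian with rate function ℓ, satisfying (H0a): for all ε ∈ [0,τ] the state set E(ε) = {U_ε} is a singleton, and the adjoint equation at ε = 0 (find P₀ ∈ Y with ∂_U L(0,U₀,P₀)(φ) = 0 for all φ ∈ X) admits a unique solution P₀. Assume moreover that for each ε ∈ [0,τ] the directional derivatives ∂_U L(ε, U₀+θ(U_ε−U₀), P₀)(U_ε−U₀) exist for almost all θ ∈ [0,1], are integrable in θ, and L(ε,U_ε,P₀) − L(ε,U₀,P₀) = ∫₀¹ ∂_U L(ε, U₀+θ(U_ε−U₀), P₀)(U_ε−U₀) dθ. Define for ε > 0: R₁^ε(U₀,P₀)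 = (1/ℓ(ε)) ∫₀¹ [∂_U L(ε, θU_ε+(1−θ)U₀, P₀) − ∂_U L(ε, U₀, P₀)](U_ε−U₀) dθ and R₂^ε(U₀,P₀) = (1/ℓ(ε)) [∂_U L(ε, U₀, P₀) − ∂_U L(0, U₀, P₀)](U_ε−U₀). If the limits R₁(U₀,P₀) = lim_{ε→0⁺} R₁^ε(U₀,P₀) and R₂(U₀,P₀) = lim_{ε→0⁺} R₂^ε(U₀,P₀) exist, then the ℓ-derivative d_ℓ g(0) = lim_{ε→0⁺} (g(ε) − g(0))/ℓ(ε) of the reduced functional g(ε) = L(ε,U_ε,0) exists and d_ℓ g(0) = ∂_ℓ L(0,U₀,P₀) + R₁(U₀,P₀) + R₂(U₀,P₀). -/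
open Filter Topology MeasureTheory

noncomputable section

/-! On the state `U_ε` the Lagrangian does not depend on the adjoint variable, so
`g(ε) - g(0) = L(ε,U_ε,P₀) - L(0,U₀,P₀)`. Splitting this increment at `L(ε,U₀,P₀)`,
writing `L(ε,U_ε,P₀) - L(ε,U₀,P₀)` as the integral of `∂_U L` along the segment `[U₀,U_ε]`,
and subtracting `∂_U L(0,U₀,P₀)(U_ε - U₀) = 0` (the adjoint equation), the increment becomes
the sum of the three numerators whose quotients by `ℓ(ε)` converge to `∂_ℓ L`, `R₁` and `R₂`. -/

theorem intervalIntegral.integral_eq_integral_sub_const_add {f : ℝ → ℝ} {a b : ℝ}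
    (hf : IntervalIntegrable f volume a b) (c : ℝ) :
    ∫ x in a..b, f x = (∫ x in a..b, (f x - c)) + (b - a) * c := by
  rw [intervalIntegral.integral_sub hf intervalIntegrable_const,
    intervalIntegral.integral_const, smul_eq_mul]
  ring

theorem lagrangian_increment_eq {X Y : Type*} [AddCommGroup X] [Module ℝ X]
    (L : ℝ → X → Y → ℝ) (DU : ℝ → X → Y → X → ℝ) {ε : ℝ} {U₀ U₁ : X} {P : Y}
    (hint : IntervalIntegrable (fun θ : ℝ => DU ε (U₀ + θ • (U₁ - U₀)) P (U₁ - U₀)) volume 0 1)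
    (hFTC : L ε U₁ P - L ε U₀ P = ∫ θ in (0:ℝ)..1, DU ε (U₀ + θ • (U₁ - U₀)) P (U₁ - U₀))
    (hadj : DU 0 U₀ P (U₁ - U₀) = 0) :
    L ε U₁ P - L 0 U₀ P
      = (L ε U₀ P - L 0 U₀ P)
        + (∫ θ in (0:ℝ)..1, (DU ε (θ • U₁ + (1 - θ) • U₀) P (U₁ - U₀) - DU ε U₀ P (U₁ - U₀)))
        + (DU ε U₀ P (U₁ - U₀) - DU 0 U₀ P (U₁ - U₀)) := by
  have hseg : ∀ θ : ℝ, U₀ + θ • (U₁ - U₀) = θ • U₁ + (1 - θ) • U₀ := fun θ => by module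
  simp only [hseg] at hint hFTC
  rw [intervalIntegral.integral_eq_integral_sub_const_add hint (DU ε U₀ P (U₁ - U₀))] at hFTC
  linarith

theorem stmt_12_general {X Y : Type*} [AddCommGroup X] [Module ℝ X] [AddCommGroup Y] [Module ℝ Y]
    (τ : ℝ) (hτ : 0 < τ)
    (L : ℝ → X → Y → ℝ)
    -- rate function
    (ℓ : ℝ → ℝ)
    -- directional derivative `∂_U L` (as data)
    (DU : ℝ → X → Y → X → ℝ)
    -- (H0a)(i): the state set `E(ε)` is the singleton `{Usel ε}`
    (Usel : ℝ → X)
    (hstate : ∀ ε ∈ Set.Icc (0:ℝ) τ,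
      {U : X | ∀ ψ : Y, L ε U ψ = L ε U 0} = {Usel ε})
    -- (H0a)(ii): the adjoint equation at `ε = 0` has the unique solution `P₀`
    (P0 : Y)
    (hadj : {P : Y | ∀ φ : X, DU 0 (Usel 0) P φ = 0} = {P0})
    -- a.e. existence of the directional derivative along the segment, and
    -- integrability in `θ`
    (hDU : ∀ ε ∈ Set.Icc (0:ℝ) τ,
      (∀ᵐ θ ∂(volume.restrict (Set.Icc (0:ℝ) 1)),
        Tendsto (fun t : ℝ =>
            (L ε (Usel 0 + θ • (Usel ε - Usel 0) + t • (Usel ε - Usel 0)) P0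
              - L ε (Usel 0 + θ • (Usel ε - Usel 0)) P0) / t)
          (𝓝[>] 0) (𝓝 (DU ε (Usel 0 + θ • (Usel ε - Usel 0)) P0 (Usel ε - Usel 0))))
      ∧ IntervalIntegrable
          (fun θ : ℝ => DU ε (Usel 0 + θ • (Usel ε - Usel 0)) P0 (Usel ε - Usel 0))
          volume 0 1)
    -- absolute continuity of `θ ↦ L(ε, U₀ + θ(U_ε−U₀), P₀)`, expressed through
    -- the fundamental-theorem-of-calculus identity it implies
    (hAC : ∀ ε ∈ Set.Icc (0:ℝ) τ,
      L ε (Usel ε) P0 - L ε (Usel 0) P0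
        = ∫ θ in (0:ℝ)..1, DU ε (Usel 0 + θ • (Usel ε - Usel 0)) P0 (Usel ε - Usel 0))
    -- differentiability in `ℓ`: `∂_ℓ L(0,U₀,P₀)` exists
    (dL : ℝ)
    (hdL : Tendsto (fun ε : ℝ => (L ε (Usel 0) P0 - L 0 (Usel 0) P0) / ℓ ε)
      (𝓝[>] 0) (𝓝 dL))
    -- existence of the limits of the remainders `R₁^ε` and `R₂^ε`
    (R1 : ℝ)
    (hR1 : Tendsto (fun ε : ℝ => (1 / ℓ ε) *
        ∫ θ in (0:ℝ)..1,
          (DU ε (θ • Usel ε + (1 - θ) • Usel 0) P0 (Usel ε - Usel 0)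
            - DU ε (Usel 0) P0 (Usel ε - Usel 0)))
      (𝓝[>] 0) (𝓝 R1))
    (R2 : ℝ)
    (hR2 : Tendsto (fun ε : ℝ => (1 / ℓ ε) *
        (DU ε (Usel 0) P0 (Usel ε - Usel 0) - DU 0 (Usel 0) P0 (Usel ε - Usel 0)))
      (𝓝[>] 0) (𝓝 R2)) :
    Tendsto (fun ε : ℝ => (L ε (Usel ε) 0 - L 0 (Usel 0) 0) / ℓ ε)
      (𝓝[>] 0) (𝓝 (dL + R1 + R2)) := by
  have hP0 : ∀ φ : X, DU 0 (Usel 0) P0 φ = 0 := (Set.eq_singleton_iff_unique_mem.mp hadj).1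
  have hstate_eq : ∀ ε ∈ Set.Icc (0:ℝ) τ, L ε (Usel ε) 0 = L ε (Usel ε) P0 :=
    fun ε hε => ((Set.eq_singleton_iff_unique_mem.mp (hstate ε hε)).1 P0).symm
  refine ((hdL.add hR1).add hR2).congr' ?_
  filter_upwards [Ioc_mem_nhdsGT hτ] with ε hε
  have hεIcc : ε ∈ Set.Icc (0:ℝ) τ := ⟨hε.1.le, hε.2⟩
  rw [hstate_eq ε hεIcc, hstate_eq 0 ⟨le_rfl, hτ.le⟩,
    lagrangian_increment_eq L DU (hDU ε hεIcc).2 (hAC ε hεIcc) (hP0 _)]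
  ring

/-- **Gangl–Sturm theorem on the `ℓ`-derivative of a parametrized Lagrangian.**
Let `L : [0,τ] × X × Y → ℝ` be a differentiable parametrized Lagrangian (affine
in the adjoint variable) with rate function `ℓ` (`ℓ(0) = 0`, `ℓ > 0` on
`(0,τ]`), satisfying (H0a): for each `ε` the state set is the singleton
`{U_ε}` (the state equation, by affineness, being `L(ε,U_ε,ψ) = L(ε,U_ε,0)` for
all `ψ`), and the adjoint equation at `ε = 0` has the unique solution `P₀`
(`DU` denotes the directional derivative `∂_U L`).  Assume the directional
derivatives along the segment `[U₀,U_ε]` in direction `U_ε − U₀` exist a.e.,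
are integrable in `θ`, and satisfy the fundamental-theorem identity
(absolute continuity), and that `∂_ℓ L(0,U₀,P₀)` exists.  If the limits
`R₁(U₀,P₀)` and `R₂(U₀,P₀)` of the two remainder terms exist, then the
`ℓ`-derivative of `g(ε) = L(ε,U_ε,0)` exists at `0` and
`d_ℓ g(0) = ∂_ℓ L(0,U₀,P₀) + R₁(U₀,P₀) + R₂(U₀,P₀)`. -/
theorem stmt_12 {X Y : Type*} [AddCommGroup X] [Module ℝ X] [AddCommGroup Y] [Module ℝ Y]
    (τ : ℝ) (hτ : 0 < τ)
    (L : ℝ → X → Y → ℝ)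
    -- parametrized Lagrangian: affine in the adjoint variable
    (haff : ∀ (ε : ℝ) (U : X) (P Q : Y) (t : ℝ),
      L ε U (t • P + (1 - t) • Q) = t * L ε U P + (1 - t) * L ε U Q)
    -- rate function
    (ℓ : ℝ → ℝ) (hℓ0 : ℓ 0 = 0) (hℓpos : ∀ ε ∈ Set.Ioc (0:ℝ) τ, 0 < ℓ ε)
    -- directional derivative `∂_U L` (as data)
    (DU : ℝ → X → Y → X → ℝ)
    -- (H0a)(i): the state set `E(ε)` is the singleton `{Usel ε}`
    (Usel : ℝ → X)
    (hstate : ∀ ε ∈ Set.Icc (0:ℝ) τ,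
      {U : X | ∀ ψ : Y, L ε U ψ = L ε U 0} = {Usel ε})
    -- (H0a)(ii): the adjoint equation at `ε = 0` has the unique solution `P₀`
    (P0 : Y)
    (hadj : {P : Y | ∀ φ : X, DU 0 (Usel 0) P φ = 0} = {P0})
    -- a.e. existence of the directional derivative along the segment, and
    -- integrability in `θ`
    (hDU : ∀ ε ∈ Set.Icc (0:ℝ) τ,
      (∀ᵐ θ ∂(volume.restrict (Set.Icc (0:ℝ) 1)),
        Tendsto (fun t : ℝ =>
            (L ε (Usel 0 + θ • (Usel ε - Usel 0) + t • (Usel ε - Usel 0)) P0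
              - L ε (Usel 0 + θ • (Usel ε - Usel 0)) P0) / t)
          (𝓝[>] 0) (𝓝 (DU ε (Usel 0 + θ • (Usel ε - Usel 0)) P0 (Usel ε - Usel 0))))
      ∧ IntervalIntegrable
          (fun θ : ℝ => DU ε (Usel 0 + θ • (Usel ε - Usel 0)) P0 (Usel ε - Usel 0))
          volume 0 1)
    -- absolute continuity of `θ ↦ L(ε, U₀ + θ(U_ε−U₀), P₀)`, expressed through
    -- the fundamental-theorem-of-calculus identity it implies
    (hAC : ∀ ε ∈ Set.Icc (0:ℝ) τ,
      L ε (Usel ε) P0 - L ε (Usel 0) P0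
        = ∫ θ in (0:ℝ)..1, DU ε (Usel 0 + θ • (Usel ε - Usel 0)) P0 (Usel ε - Usel 0))
    -- differentiability in `ℓ`: `∂_ℓ L(0,U₀,P₀)` exists
    (dL : ℝ)
    (hdL : Tendsto (fun ε : ℝ => (L ε (Usel 0) P0 - L 0 (Usel 0) P0) / ℓ ε)
      (𝓝[>] 0) (𝓝 dL))
    -- existence of the limits of the remainders `R₁^ε` and `R₂^ε`
    (R1 : ℝ)
    (hR1 : Tendsto (fun ε : ℝ => (1 / ℓ ε) *
        ∫ θ in (0:ℝ)..1,
          (DU ε (θ • Usel ε + (1 - θ) • Usel 0) P0 (Usel ε - Usel 0)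
            - DU ε (Usel 0) P0 (Usel ε - Usel 0)))
      (𝓝[>] 0) (𝓝 R1))
    (R2 : ℝ)
    (hR2 : Tendsto (fun ε : ℝ => (1 / ℓ ε) *
        (DU ε (Usel 0) P0 (Usel ε - Usel 0) - DU 0 (Usel 0) P0 (Usel ε - Usel 0)))
      (𝓝[>] 0) (𝓝 R2)) :
    Tendsto (fun ε : ℝ => (L ε (Usel ε) 0 - L 0 (Usel 0) 0) / ℓ ε)
      (𝓝[>] 0) (𝓝 (dL + R1 + R2)) :=
  stmt_12_general τ hτ L ℓ DU Usel hstate P0 hadj hDU hAC dL hdL R1 hR1 R2 hR2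
end
end
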